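/- Let h, w₁, w₂, c > 0 with w₂ ≠ 1. As h → 0 (with w₁, w₂, c fixed), the Gaussian RBF-FD second-derivative weight β₀ on the stencil {x−w₂h, x−h, x, x+w₁h} admits the expansion β₀ = −2(w₂ − w₁ + 1)/(h² w₂ w₁) + [w₁ + (w₂+1)(w₂(w₁−1) − w₁²)]/(c² w₂ w₁) + O(h³), where β₀ = μ₂/(c²h²w₂w₁) and μ₂ = −w₂(2c² + h²(w₁−1)w₁ + h²) + (w₁−1)(2c² − h²w₁) + h²(w₁−1)w₂². -/
import Mathlib


open Filter Asymptotics Topology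

/-- `μ₁` of Theorem 2. -/
noncomputable def mu1 (h c w2 w1 : ℝ) : ℝ :=
  -w1 * (2 * c ^ 2 + h ^ 2 * w2 * (w2 + 3) + 3 * h ^ 2)
    + w2 * (2 * c ^ 2 + h ^ 2 * w2 + 3 * h ^ 2) + h ^ 2 * (w2 + 1) * w1 ^ 2

/-- `μ₂` of Theorem 2. -/
noncomputable def mu2 (h c w2 w1 : ℝ) : ℝ :=
  -w2 * (2 * c ^ 2 + h ^ 2 * (w1 - 1) * w1 + h ^ 2)
    + (w1 - 1) * (2 * c ^ 2 - h ^ 2 * w1) + h ^ 2 * (w1 - 1) * w2 ^ 2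

/-- Gaussian RBF--FD second-derivative weight at the node `x - w₂ h`. -/
noncomputable def betam2 (h c w2 w1 : ℝ) : ℝ :=
  ((w1 - 1) * (2 * c ^ 2 - h ^ 2 * w1) + 3 * h ^ 2 * w2 ^ 2 * (w1 - 1)
      - h ^ 2 * w2 * ((w1 - 3) * w1 + 1))
    / (c ^ 2 * h ^ 2 * (w2 - 1) * w2 * (w2 + w1))

/-- Gaussian RBF--FD second-derivative weight at the node `x - h`. -/
noncomputable def betam1 (h c w2 w1 : ℝ) : ℝ :=
  mu1 h c w2 w1 / (c ^ 2 * h ^ 2 * (w2 - 1) * (w1 + 1))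

/-- Gaussian RBF--FD second-derivative weight at the center node `x`. -/
noncomputable def beta0 (h c w2 w1 : ℝ) : ℝ :=
  mu2 h c w2 w1 / (c ^ 2 * h ^ 2 * w2 * w1)

/-- Gaussian RBF--FD second-derivative weight at the node `x + w₁ h`. -/
noncomputable def betap1 (h c w2 w1 : ℝ) : ℝ :=
  ((w2 + 1) * (2 * c ^ 2 + h ^ 2 * w2) + 3 * h ^ 2 * (w2 + 1) * w1 ^ 2
      - h ^ 2 * (w2 * (w2 + 3) + 1) * w1)
    / (c ^ 2 * h ^ 2 * w1 * (w1 + 1) * (w2 + w1))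

/-- Taylor expansion of the central Gaussian RBF--FD second-derivative weight `β₀`
on the stencil `{x - w₂h, x - h, x, x + w₁h}` as `h → 0⁺`:
`β₀ = -2(w₂-w₁+1)/(h²w₂w₁) + [w₁+(w₂+1)(w₂(w₁-1)-w₁²)]/(c²w₂w₁) + O(h³)`. -/
theorem rbf_fd_beta0_expansion
    (w1 w2 c : ℝ) (hw1 : 0 < w1) (hw2 : 0 < w2) (hw2' : w2 ≠ 1) (hc : 0 < c) :
    (fun h : ℝ =>
        beta0 h c w2 w1
          - (-(2 * (w2 - w1 + 1)) / (h ^ 2 * w2 * w1))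
          - (w1 + (w2 + 1) * (w2 * (w1 - 1) - w1 ^ 2)) / (c ^ 2 * w2 * w1))
      =O[𝓝[>] (0 : ℝ)] fun h : ℝ => h ^ 3 := by
  have hz : (fun h : ℝ =>
        beta0 h c w2 w1
          - (-(2 * (w2 - w1 + 1)) / (h ^ 2 * w2 * w1))
          - (w1 + (w2 + 1) * (w2 * (w1 - 1) - w1 ^ 2)) / (c ^ 2 * w2 * w1))
      =ᶠ[𝓝[>] (0 : ℝ)] (fun _ => (0 : ℝ)) := by
    filter_upwards [self_mem_nhdsWithin] with h hh
    have hh' : h ≠ 0 := ne_of_gt hh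
    have hw1' : w1 ≠ 0 := ne_of_gt hw1
    have hw2'' : w2 ≠ 0 := ne_of_gt hw2
    have hc' : c ≠ 0 := ne_of_gt hc
    simp only [beta0, mu2]
    field_simp
    ring
  calc _ =O[𝓝[>] (0:ℝ)] (fun _ : ℝ => (0:ℝ)) := hz.isBigO
    _ =O[𝓝[>] (0:ℝ)] (fun h : ℝ => h ^ 3) := isBigO_zero _ _
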